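/- arXiv:math/0609349 — 2 statements merged into one kernel-verified Lean document; each statement's English description precedes it below -/
import Mathlib

section
/- Let R be a λ-ring containing ℚ (with Adams operations ψ_k), and define Exp: x·R⟦x⟧ → 1 + x·R⟦x⟧ by Exp(f) = exp(Σ_{k≥1} ψ_k(f)/k) and Log: 1 + x·R⟦x⟧ → x·R⟦x⟧ by Log(f) = Σ_{k≥1} (μ(k)/k)·ψ_k(log f), where μ is the Möbius function and ψ_k acts on power series by ψ_k(a x^n) = ψ_k(a) x^{kn}. Then Exp and Log are mutually inverse bijections. -/
noncomputable section

open PowerSeries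

variable {R : Type*} [CommRing R] [Algebra ℚ R]

/-- `S(f) = Σ_{k≥1} ψ_k(f)/k`, where the Adams operations `ψ_k` act on power series by
`ψ_k(a xⁿ) = ψ_k(a) x^{kn}` (defined coefficientwise; only `k ∣ n` contributes to `xⁿ`). -/
def adamsS (ψ : ℕ → R →+* R) (f : PowerSeries R) : PowerSeries R :=
  PowerSeries.mk fun n => ∑ k ∈ n.divisors, ((k : ℚ)⁻¹) • ψ k (PowerSeries.coeff (n / k) f)

/-- `M(f) = Σ_{k≥1} (μ(k)/k)·ψ_k(f)`, with `μ` the Möbius function. -/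
def adamsM (ψ : ℕ → R →+* R) (f : PowerSeries R) : PowerSeries R :=
  PowerSeries.mk fun n => ∑ k ∈ n.divisors,
    (((ArithmeticFunction.moebius k : ℤ) : ℚ) / k) • ψ k (PowerSeries.coeff (n / k) f)

/-- Formal exponential `exp(f) = Σ_k f^k/k!`, coefficientwise (intended for
`f` with zero constant term, where the sum over `k` is finite in each degree). -/
def fexp (f : PowerSeries R) : PowerSeries R :=
  PowerSeries.mk fun n =>
    ∑ k ∈ Finset.range (n + 1), ((k.factorial : ℚ)⁻¹) • PowerSeries.coeff n (f ^ k)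

/-- Formal logarithm `log(g) = Σ_{k≥1} (-1)^{k+1}(g-1)^k/k`, coefficientwise (intended
for `g` with constant term 1). -/
def flog (g : PowerSeries R) : PowerSeries R :=
  PowerSeries.mk fun n =>
    ∑ k ∈ Finset.range (n + 1), ((-1 : ℚ) ^ (k + 1) / k) • PowerSeries.coeff n ((g - 1) ^ k)

/-- `Exp(f) = exp(Σ_{k≥1} ψ_k(f)/k)`. -/
def lrExp (ψ : ℕ → R →+* R) (f : PowerSeries R) : PowerSeries R := fexp (adamsS ψ f)

/-- `Log(g) = Σ_{k≥1} (μ(k)/k)·ψ_k(log g)` (Cadogan's formula). -/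
def lrLog (ψ : ℕ → R →+* R) (g : PowerSeries R) : PowerSeries R := adamsM ψ (flog g)

section Aux
set_option linter.unusedSectionVars false
open Finset

lemma coeff_pow_eq_zero {f : R⟦X⟧} (hf : constantCoeff f = 0) {n k : ℕ} (h : n < k) :
    coeff n (f ^ k) = 0 := by
  obtain ⟨g, rfl⟩ := X_dvd_iff.mpr hf
  rw [mul_pow, mul_comm, coeff_mul_X_pow', if_neg (by omega)]

lemma constantCoeff_fexp (f : R⟦X⟧) : constantCoeff (fexp f) = 1 := by
  rw [← coeff_zero_eq_constantCoeff]
  simp [fexp]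

lemma constantCoeff_flog (g : R⟦X⟧) : constantCoeff (flog g) = 0 := by
  rw [← coeff_zero_eq_constantCoeff]
  simp [flog]

def Eser (f : R⟦X⟧) (N : ℕ) : R⟦X⟧ := ∑ k ∈ range N, ((k.factorial : ℚ)⁻¹) • f ^ k

def Lser (w : R⟦X⟧) (N : ℕ) : R⟦X⟧ := ∑ k ∈ range N, ((-1 : ℚ) ^ (k + 1) / k) • w ^ k

lemma coeff_fexp_eq {f : R⟦X⟧} (hf : constantCoeff f = 0) {n N : ℕ} (h : n < N) :
    coeff n (fexp f) = coeff n (Eser f N) := by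
  rw [fexp, coeff_mk, Eser, map_sum]
  simp_rw [coeff_smul]
  refine Finset.sum_subset (by intro k hk; simp_all; omega) ?_
  intro k hk hk'
  rw [coeff_pow_eq_zero hf (by simp_all), smul_zero]

lemma coeff_flog_eq {g : R⟦X⟧} (hg : constantCoeff g = 1) {n N : ℕ} (h : n < N) :
    coeff n (flog g) = coeff n (Lser (g - 1) N) := by
  have hw : constantCoeff (g - 1) = 0 := by simp [hg]
  rw [flog, coeff_mk, Lser, map_sum]
  simp_rw [coeff_smul]
  refine Finset.sum_subset (by intro k hk; simp_all; omega) ?_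
  intro k hk hk'
  rw [coeff_pow_eq_zero hw (by simp_all), smul_zero]

lemma deriv_qsmul (c : ℚ) (h : R⟦X⟧) : d⁄dX R (c • h) = c • d⁄dX R h :=
  map_rat_smul (d⁄dX R).toLinearMap c h

def Gser (w : R⟦X⟧) (N : ℕ) : R⟦X⟧ := ∑ j ∈ range N, ((-1 : ℚ) ^ j) • w ^ j

lemma deriv_Eser (f : R⟦X⟧) (N : ℕ) :
    d⁄dX R (Eser f (N + 1)) = d⁄dX R f * Eser f N := by
  rw [Eser, map_sum, Finset.sum_range_succ']
  have h0 : d⁄dX R (((Nat.factorial 0 : ℚ))⁻¹ • f ^ 0) = 0 := by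
    simp [deriv_qsmul]
  rw [h0, add_zero]
  rw [Eser, Finset.mul_sum]
  refine Finset.sum_congr rfl fun j hj => ?_
  rw [deriv_qsmul, Derivation.leibniz_pow, smul_eq_mul, Nat.add_sub_cancel]
  rw [smul_comm, ← smul_assoc, mul_comm (d⁄dX R f), ← smul_mul_assoc]
  congr 1
  congr 1
  rw [nsmul_eq_mul]
  have : ((j+1).factorial : ℚ) = (j+1) * (j.factorial : ℚ) := by
    rw [Nat.factorial_succ]; push_cast; ring
  rw [this, mul_inv]
  push_cast
  have h1 : ((j:ℚ)+1) ≠ 0 := by positivity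
  field_simp

lemma deriv_Lser (w : R⟦X⟧) (N : ℕ) :
    d⁄dX R (Lser w (N + 1)) = d⁄dX R w * Gser w N := by
  rw [Lser, map_sum, Finset.sum_range_succ']
  have h0 : d⁄dX R (((-1 : ℚ) ^ (0 + 1) / (0:ℕ)) • w ^ 0) = 0 := by
    simp [deriv_qsmul]
  rw [h0, add_zero]
  rw [Gser, Finset.mul_sum]
  refine Finset.sum_congr rfl fun j hj => ?_
  rw [deriv_qsmul, Derivation.leibniz_pow, smul_eq_mul, Nat.add_sub_cancel]
  rw [smul_comm, ← smul_assoc, mul_comm (d⁄dX R w), ← smul_mul_assoc]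
  congr 1
  congr 1
  rw [nsmul_eq_mul]
  push_cast
  have h1 : ((j:ℚ)+1) ≠ 0 := by positivity
  field_simp
  ring

lemma geom_Gser (w : R⟦X⟧) (N : ℕ) :
    (1 + w) * Gser w (N + 1) = 1 + ((-1 : ℚ) ^ (N + 2)) • w ^ (N + 1) := by
  induction N with
  | zero => simp [Gser]
  | succ N ih =>
    rw [Gser, Finset.sum_range_succ, ← Gser, mul_add, ih]
    rw [mul_smul_comm]
    have : (1 + w) * w ^ (N + 1) = w ^ (N + 1) + w ^ (N + 2) := by ring
    rw [this, smul_add]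
    rw [pow_succ (-1 : ℚ) (N + 2), mul_comm ((-1:ℚ)^(N+2)), ← smul_smul]
    module

lemma mul_congr_coeff {n : ℕ} {C A B : R⟦X⟧} (h : ∀ j ≤ n, coeff j A = coeff j B) :
    coeff n (C * A) = coeff n (C * B) := by
  rw [coeff_mul, coeff_mul]
  refine Finset.sum_congr rfl fun p hp => ?_
  rw [Finset.HasAntidiagonal.mem_antidiagonal] at hp
  rw [h p.2 (by omega)]

lemma deriv_fexp {f : R⟦X⟧} (hf : constantCoeff f = 0) :
    d⁄dX R (fexp f) = d⁄dX R f * fexp f := by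
  ext n
  rw [coeff_derivative, coeff_fexp_eq hf (by omega : n + 1 < n + 2), ← coeff_derivative,
    deriv_Eser]
  refine mul_congr_coeff fun j hj => ?_
  exact (coeff_fexp_eq hf (by omega)).symm

lemma deriv_flog {g : R⟦X⟧} (hg : constantCoeff g = 1) :
    g * d⁄dX R (flog g) = d⁄dX R g := by
  have hw : constantCoeff (g - 1) = 0 := by simp [hg]
  ext n
  have h1 : coeff n (g * d⁄dX R (flog g)) = coeff n (g * d⁄dX R (Lser (g - 1) (n + 2))) := by
    refine mul_congr_coeff fun j hj => ?_
    rw [coeff_derivative, coeff_derivative, coeff_flog_eq hg (by omega : j + 1 < n + 2)]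
  rw [h1, deriv_Lser]
  have hg' : g = 1 + (g - 1) := by ring
  have h2 : g * (d⁄dX R (g - 1) * Gser (g - 1) (n + 1))
      = d⁄dX R (g - 1) * ((1 + (g - 1)) * Gser (g - 1) (n + 1)) := by
    rw [← hg']; ring
  rw [h2, geom_Gser, mul_add, mul_one, map_add, mul_smul_comm, coeff_smul]
  have h3 : coeff n (d⁄dX R (g - 1) * (g - 1) ^ (n + 1)) = 0 := by
    rw [coeff_mul]
    refine Finset.sum_eq_zero fun p hp => ?_
    rw [Finset.HasAntidiagonal.mem_antidiagonal] at hp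
    rw [coeff_pow_eq_zero hw (by omega), mul_zero]
  rw [h3, smul_zero, add_zero]
  congr 1
  rw [map_sub, Derivation.map_one_eq_zero, sub_zero]

lemma nzsd : NoZeroSMulDivisors ℕ R := by
  constructor
  intro n x h
  by_cases hn : n = 0
  · exact Or.inl hn
  · right
    have h2 : ((n : ℚ))⁻¹ • (n • x) = x := by
      rw [← Nat.cast_smul_eq_nsmul ℚ, smul_smul, inv_mul_cancel₀ (by exact_mod_cast hn), one_smul]
    rw [← h2, h, smul_zero]

lemma flog_fexp {f : R⟦X⟧} (hf : constantCoeff f = 0) : flog (fexp f) = f := by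
  haveI := nzsd (R := R)
  haveI : IsAddTorsionFree R := IsAddTorsionFree.of_module_rat R
  apply derivative.ext
  · have h1 : fexp f * d⁄dX R (flog (fexp f)) = fexp f * d⁄dX R f := by
      rw [deriv_flog (constantCoeff_fexp f), deriv_fexp hf]; ring
    have hu : IsUnit (fexp f) := by
      rw [PowerSeries.isUnit_iff_constantCoeff, constantCoeff_fexp]
      exact isUnit_one
    exact hu.mul_left_cancel h1
  · rw [constantCoeff_flog, hf]

lemma fexp_flog {g : R⟦X⟧} (hg : constantCoeff g = 1) : fexp (flog g) = g := by
  haveI := nzsd (R := R)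
  haveI : IsAddTorsionFree R := IsAddTorsionFree.of_module_rat R
  have hgu : IsUnit g := by
    rw [PowerSeries.isUnit_iff_constantCoeff, hg]; exact isUnit_one
  obtain ⟨u, hu⟩ := hgu
  set h := fexp (flog g) with hh
  set v : R⟦X⟧ := ↑u⁻¹ with hvdef
  have hv : v * g = 1 := by rw [hvdef, ← hu, ← Units.val_mul, inv_mul_cancel, Units.val_one]
  have hE : d⁄dX R h = d⁄dX R (flog g) * h := by
    rw [hh, deriv_fexp (constantCoeff_flog g)]
  have hL : g * d⁄dX R (flog g) = d⁄dX R g := deriv_flog hg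
  have hdv : d⁄dX R v = -(v ^ 2) * d⁄dX R g := by
    rw [hvdef, derivative_inv, hu]
  have key : h * v = 1 := by
    apply derivative.ext
    · rw [Derivation.leibniz, smul_eq_mul, smul_eq_mul, Derivation.map_one_eq_zero,
        hdv, hE, ← hL]
      linear_combination (-(h * d⁄dX R (flog g) * v)) * hv
    · have hcv : constantCoeff v * constantCoeff g = 1 := by
        rw [← map_mul, hv, map_one]
      rw [map_mul, map_one, hh, constantCoeff_fexp, one_mul]
      rw [hg, mul_one] at hcv
      exact hcv
  calc h = h * (v * g) := by rw [hv, mul_one]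
    _ = (h * v) * g := by ring
    _ = g := by rw [key, one_mul]


def psiL (ψ : ℕ → R →+* R) (k : ℕ) : Module.End ℚ R where
  toFun := ψ k
  map_add' := by simp
  map_smul' c x := by simpa using map_rat_smul (ψ k).toAddMonoidHom c x

@[simp] lemma psiL_apply (ψ : ℕ → R →+* R) (k : ℕ) (x : R) : psiL ψ k x = ψ k x := rfl

def Afun (ψ : ℕ → R →+* R) : ArithmeticFunction (Module.End ℚ R) :=
  ⟨fun k => ((k : ℚ)⁻¹) • psiL ψ k, by simp⟩

def Bfun (ψ : ℕ → R →+* R) : ArithmeticFunction (Module.End ℚ R) :=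
  ⟨fun k => ((((ArithmeticFunction.moebius k : ℤ) : ℚ)) / k) • psiL ψ k, by simp⟩

def coeffFun (f : PowerSeries R) (hf : constantCoeff f = 0) : ArithmeticFunction R :=
  ⟨fun n => coeff n f, by simpa using hf⟩

lemma coeff_adamsS (ψ : ℕ → R →+* R) {f : R⟦X⟧} (hf : constantCoeff f = 0) (n : ℕ) :
    coeff n (adamsS ψ f) = (Afun ψ • coeffFun f hf) n := by
  rw [adamsS, coeff_mk, ArithmeticFunction.smul_apply,
    ← Nat.sum_divisorsAntidiagonal (fun i j => ((i : ℚ)⁻¹) • ψ i (coeff j f))]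
  refine Finset.sum_congr rfl fun p hp => ?_
  rw [Afun]
  show _ = (((p.1 : ℚ)⁻¹) • psiL ψ p.1) • (coeffFun f hf p.2)
  rw [Module.End.smul_def, LinearMap.smul_apply, psiL_apply]
  rfl

lemma coeff_adamsM (ψ : ℕ → R →+* R) {f : R⟦X⟧} (hf : constantCoeff f = 0) (n : ℕ) :
    coeff n (adamsM ψ f) = (Bfun ψ • coeffFun f hf) n := by
  rw [adamsM, coeff_mk, ArithmeticFunction.smul_apply,
    ← Nat.sum_divisorsAntidiagonal
      (fun i j => ((((ArithmeticFunction.moebius i : ℤ) : ℚ)) / i) • ψ i (coeff j f))]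
  refine Finset.sum_congr rfl fun p hp => ?_
  rw [Bfun]
  show _ = (((((ArithmeticFunction.moebius p.1 : ℤ) : ℚ)) / p.1) • psiL ψ p.1) • (coeffFun f hf p.2)
  rw [Module.End.smul_def, LinearMap.smul_apply, psiL_apply]
  rfl

lemma moebius_sum (n : ℕ) (hn : n ≠ 0) :
    ∑ p ∈ n.divisorsAntidiagonal, ((ArithmeticFunction.moebius p.1 : ℤ) : ℚ)
      = if n = 1 then 1 else 0 := by
  have h := congrArg (fun F => F n)
    (ArithmeticFunction.coe_moebius_mul_coe_zeta (R := ℚ))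
  simp only [ArithmeticFunction.mul_apply, ArithmeticFunction.one_apply] at h
  rw [← h]
  refine Finset.sum_congr rfl fun p hp => ?_
  have hp2 : p.2 ≠ 0 := (Nat.mem_divisorsAntidiagonal.mp hp).2 |> fun _ => by
    rcases Nat.mem_divisorsAntidiagonal.mp hp with ⟨hmul, _⟩
    exact fun h0 => hn (by rw [← hmul, h0, mul_zero])
  rw [ArithmeticFunction.intCoe_apply, ArithmeticFunction.natCoe_apply,
    ArithmeticFunction.zeta_apply_ne hp2, Nat.cast_one, mul_one]

lemma psiL_one (ψ : ℕ → R →+* R) (hψ1 : ψ 1 = RingHom.id R) : psiL ψ 1 = 1 :=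
  LinearMap.ext fun x => by simp [hψ1]

lemma psiL_mul (ψ : ℕ → R →+* R)
    (hψcomp : ∀ k l : ℕ, 0 < k → 0 < l → (ψ k).comp (ψ l) = ψ (k * l))
    {k l : ℕ} (hk : 0 < k) (hl : 0 < l) :
    psiL ψ k * psiL ψ l = psiL ψ (k * l) :=
  LinearMap.ext fun x => by
    rw [Module.End.mul_apply, psiL_apply, psiL_apply, psiL_apply,
      ← RingHom.comp_apply, hψcomp k l hk hl]

lemma moebius_sum' (n : ℕ) (hn : n ≠ 0) :
    ∑ p ∈ n.divisorsAntidiagonal, ((ArithmeticFunction.moebius p.2 : ℤ) : ℚ)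
      = if n = 1 then 1 else 0 := by
  have h := congrArg (fun F => F n)
    (ArithmeticFunction.coe_zeta_mul_coe_moebius (R := ℚ))
  simp only [ArithmeticFunction.mul_apply, ArithmeticFunction.one_apply] at h
  rw [← h]
  refine Finset.sum_congr rfl fun p hp => ?_
  obtain ⟨hmul, _⟩ := Nat.mem_divisorsAntidiagonal.mp hp
  have hp1 : p.1 ≠ 0 := fun h0 => hn (by rw [← hmul, h0, zero_mul])
  rw [ArithmeticFunction.intCoe_apply, ArithmeticFunction.natCoe_apply,
    ArithmeticFunction.zeta_apply_ne hp1, Nat.cast_one, one_mul]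

lemma BA (ψ : ℕ → R →+* R) (hψ1 : ψ 1 = RingHom.id R)
    (hψcomp : ∀ k l : ℕ, 0 < k → 0 < l → (ψ k).comp (ψ l) = ψ (k * l)) :
    Bfun ψ * Afun ψ = 1 := by
  ext n
  by_cases hn : n = 0
  · rw [hn, ArithmeticFunction.map_zero, ArithmeticFunction.map_zero]
  rw [ArithmeticFunction.mul_apply, ArithmeticFunction.one_apply]
  have hterm : ∀ p ∈ n.divisorsAntidiagonal, Bfun ψ p.1 * Afun ψ p.2
      = (((ArithmeticFunction.moebius p.1 : ℤ) : ℚ) / n) • psiL ψ n := by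
    intro p hp
    obtain ⟨hmul, _⟩ := Nat.mem_divisorsAntidiagonal.mp hp
    have h1 : 0 < p.1 := Nat.pos_of_ne_zero fun h0 => hn (by rw [← hmul, h0, zero_mul])
    have h2 : 0 < p.2 := Nat.pos_of_ne_zero fun h0 => hn (by rw [← hmul, h0, mul_zero])
    show ((((ArithmeticFunction.moebius p.1 : ℤ) : ℚ) / p.1) • psiL ψ p.1)
        * (((p.2 : ℚ)⁻¹) • psiL ψ p.2) = _
    rw [smul_mul_assoc, mul_smul_comm, smul_smul, psiL_mul ψ hψcomp h1 h2, hmul]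
    congr 1
    rw [div_eq_mul_inv, div_eq_mul_inv, mul_assoc, ← mul_inv, ← Nat.cast_mul, hmul]
  rw [Finset.sum_congr rfl hterm]
  simp_rw [div_eq_mul_inv]
  rw [← Finset.sum_smul, ← Finset.sum_mul, moebius_sum n hn]
  by_cases h1 : n = 1
  · rw [if_pos h1, if_pos h1, h1, one_mul, Nat.cast_one, inv_one, one_smul, psiL_one ψ hψ1]
  · rw [if_neg h1, if_neg h1, zero_mul, zero_smul]

lemma AB (ψ : ℕ → R →+* R) (hψ1 : ψ 1 = RingHom.id R)
    (hψcomp : ∀ k l : ℕ, 0 < k → 0 < l → (ψ k).comp (ψ l) = ψ (k * l)) :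
    Afun ψ * Bfun ψ = 1 := by
  ext n
  by_cases hn : n = 0
  · rw [hn, ArithmeticFunction.map_zero, ArithmeticFunction.map_zero]
  rw [ArithmeticFunction.mul_apply, ArithmeticFunction.one_apply]
  have hterm : ∀ p ∈ n.divisorsAntidiagonal, Afun ψ p.1 * Bfun ψ p.2
      = (((ArithmeticFunction.moebius p.2 : ℤ) : ℚ) / n) • psiL ψ n := by
    intro p hp
    obtain ⟨hmul, _⟩ := Nat.mem_divisorsAntidiagonal.mp hp
    have h1 : 0 < p.1 := Nat.pos_of_ne_zero fun h0 => hn (by rw [← hmul, h0, zero_mul])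
    have h2 : 0 < p.2 := Nat.pos_of_ne_zero fun h0 => hn (by rw [← hmul, h0, mul_zero])
    show (((p.1 : ℚ)⁻¹) • psiL ψ p.1)
        * ((((ArithmeticFunction.moebius p.2 : ℤ) : ℚ) / p.2) • psiL ψ p.2) = _
    rw [smul_mul_assoc, mul_smul_comm, smul_smul, psiL_mul ψ hψcomp h1 h2, hmul]
    congr 1
    rw [div_eq_mul_inv, div_eq_mul_inv, ← mul_assoc, mul_comm ((p.1:ℚ))⁻¹, mul_assoc,
      ← mul_inv, ← Nat.cast_mul, hmul]
  rw [Finset.sum_congr rfl hterm]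
  simp_rw [div_eq_mul_inv]
  rw [← Finset.sum_smul, ← Finset.sum_mul, moebius_sum' n hn]
  by_cases h1 : n = 1
  · rw [if_pos h1, if_pos h1, h1, one_mul, Nat.cast_one, inv_one, one_smul, psiL_one ψ hψ1]
  · rw [if_neg h1, if_neg h1, zero_mul, zero_smul]

lemma constantCoeff_adamsS (ψ : ℕ → R →+* R) (f : R⟦X⟧) :
    constantCoeff (adamsS ψ f) = 0 := by
  rw [← coeff_zero_eq_constantCoeff, adamsS, coeff_mk]; simp

lemma constantCoeff_adamsM (ψ : ℕ → R →+* R) (f : R⟦X⟧) :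
    constantCoeff (adamsM ψ f) = 0 := by
  rw [← coeff_zero_eq_constantCoeff, adamsM, coeff_mk]; simp

lemma adamsM_adamsS (ψ : ℕ → R →+* R) (hψ1 : ψ 1 = RingHom.id R)
    (hψcomp : ∀ k l : ℕ, 0 < k → 0 < l → (ψ k).comp (ψ l) = ψ (k * l))
    {f : R⟦X⟧} (hf : constantCoeff f = 0) : adamsM ψ (adamsS ψ f) = f := by
  have hS0 := constantCoeff_adamsS ψ f
  ext n
  rw [coeff_adamsM ψ hS0 n]
  have hA : coeffFun (adamsS ψ f) hS0 = Afun ψ • coeffFun f hf :=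
    ArithmeticFunction.ext fun m => coeff_adamsS ψ hf m
  rw [hA, ← ArithmeticFunction.mul_smul', BA ψ hψ1 hψcomp, ArithmeticFunction.one_smul']
  rfl

lemma adamsS_adamsM (ψ : ℕ → R →+* R) (hψ1 : ψ 1 = RingHom.id R)
    (hψcomp : ∀ k l : ℕ, 0 < k → 0 < l → (ψ k).comp (ψ l) = ψ (k * l))
    {f : R⟦X⟧} (hf : constantCoeff f = 0) : adamsS ψ (adamsM ψ f) = f := by
  have hM0 := constantCoeff_adamsM ψ f
  ext n
  rw [coeff_adamsS ψ hM0 n]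
  have hB : coeffFun (adamsM ψ f) hM0 = Bfun ψ • coeffFun f hf :=
    ArithmeticFunction.ext fun m => coeff_adamsM ψ hf m
  rw [hB, ← ArithmeticFunction.mul_smul', AB ψ hψ1 hψcomp, ArithmeticFunction.one_smul']
  rfl

end Aux

/-- For a λ-ring `R` containing `ℚ` with Adams operations `ψ_k`,
`Exp : x·R⟦x⟧ → 1 + x·R⟦x⟧` and `Log : 1 + x·R⟦x⟧ → x·R⟦x⟧` are mutually inverse. -/
theorem stmt4 (ψ : ℕ → R →+* R) (hψ1 : ψ 1 = RingHom.id R)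
    (hψcomp : ∀ k l : ℕ, 0 < k → 0 < l → (ψ k).comp (ψ l) = ψ (k * l)) :
    (∀ f : PowerSeries R, constantCoeff f = 0 → lrLog ψ (lrExp ψ f) = f) ∧
    (∀ g : PowerSeries R, constantCoeff g = 1 → lrExp ψ (lrLog ψ g) = g) := by
  constructor
  · intro f hf
    rw [lrLog, lrExp, flog_fexp (constantCoeff_adamsS ψ f), adamsM_adamsS ψ hψ1 hψcomp hf]
  · intro g hg
    rw [lrExp, lrLog, adamsS_adamsM ψ hψ1 hψcomp (constantCoeff_flog g), fexp_flog hg]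
end
end

section
/- Let Γ be a finite quiver with vertex set I, let V, W be I-graded finite-dimensional vector spaces over a field, and consider triples (x,p,q) where x is a representation of the double quiver Γ̄ on V, p ∈ Hom_I(W,V), q ∈ Hom_I(V,W). With stability parameter θ = (−1,…,−1, Σ_i dim V_i) ∈ ℤ^{I∪{*}}, a triple (x,p,q), viewed as a representation of the doubled enlarged quiver on V ⊕ F of dimension (dim V, 1), is θ-stable if and only if the only I-graded x-invariant subspace V' ⊆ V with q(V') = 0 is V' = 0. Moreover θ-stability and θ-semistability coincide for such triples. -/
open Module

variable {F : Type*} [Field F] {I H : Type*} [Fintype I]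
  {V W : I → Type*} [∀ i, AddCommGroup (V i)] [∀ i, Module F (V i)]
  [∀ i, FiniteDimensional F (V i)]
  [∀ i, AddCommGroup (W i)] [∀ i, Module F (W i)]

section Defs

variable (s t : H → I)
  (x : ∀ h : H, V (s h) →ₗ[F] V (t h)) (xbar : ∀ h : H, V (t h) →ₗ[F] V (s h))
  (p : ∀ i, W i →ₗ[F] V i) (q : ∀ i, V i →ₗ[F] W i)

/-- An `I_*`-graded subspace `(U, c)` of `V ⊕ F` (with `c ⊆ F` the component at the new
vertex `*`) is invariant under the representation `(x, p, q)` of the doubled enlarged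
quiver iff: `U` is invariant under all `x_h, x_h̄`; if `c = F` then `im(p) ⊆ U`; and if
`c = 0` then `q(U) = 0`. -/
def TripleInvariant (U : ∀ i, Submodule F (V i)) (c : Submodule F F) : Prop :=
  (∀ (h : H), ∀ v ∈ U (s h), x h v ∈ U (t h)) ∧
  (∀ (h : H), ∀ v ∈ U (t h), xbar h v ∈ U (s h)) ∧
  (c = ⊤ → ∀ i, LinearMap.range (p i) ≤ U i) ∧
  (c = ⊥ → ∀ i, U i ≤ LinearMap.ker (q i))

/-- `θ·dim(U,c)` for `θ = (-1,…,-1, Σ_i dim V_i)`. -/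
noncomputable def thetaDim (U : ∀ i, Submodule F (V i)) (c : Submodule F F) : ℤ :=
  -(∑ i, (finrank F (U i) : ℤ)) + (finrank F c : ℤ) * ∑ i, (finrank F (V i) : ℤ)

/-- The triple `(x,p,q)` is `θ`-stable: `θ·dim > 0` for every proper nonzero invariant
graded subspace of `V ⊕ F`. -/
def TripleStable : Prop :=
  ∀ (U : ∀ i, Submodule F (V i)) (c : Submodule F F),
    TripleInvariant s t x xbar p q U c →
    ¬((∀ i, U i = ⊥) ∧ c = ⊥) → ¬((∀ i, U i = ⊤) ∧ c = ⊤) →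
    0 < thetaDim U c

/-- The triple `(x,p,q)` is `θ`-semistable: `θ·dim ≥ 0` for every proper nonzero
invariant graded subspace of `V ⊕ F`. -/
def TripleSemistable : Prop :=
  ∀ (U : ∀ i, Submodule F (V i)) (c : Submodule F F),
    TripleInvariant s t x xbar p q U c →
    ¬((∀ i, U i = ⊥) ∧ c = ⊥) → ¬((∀ i, U i = ⊤) ∧ c = ⊤) →
    0 ≤ thetaDim U c

end Defs

/-- With stability parameter `θ = (-1,…,-1,Σ_i dim V_i)`, a triple
`(x,p,q)` is `θ`-stable iff the only `I`-graded `x`-invariant subspace `U ⊆ V` with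
`q(U) = 0` is `U = 0`; moreover `θ`-stability and `θ`-semistability coincide. -/
theorem stmt13 [Fintype H] (s t : H → I)
    (x : ∀ h : H, V (s h) →ₗ[F] V (t h)) (xbar : ∀ h : H, V (t h) →ₗ[F] V (s h))
    (p : ∀ i, W i →ₗ[F] V i) (q : ∀ i, V i →ₗ[F] W i) :
    (TripleStable s t x xbar p q ↔
      ∀ U : ∀ i, Submodule F (V i),
        (∀ (h : H), ∀ v ∈ U (s h), x h v ∈ U (t h)) →
        (∀ (h : H), ∀ v ∈ U (t h), xbar h v ∈ U (s h)) →
        (∀ i, U i ≤ LinearMap.ker (q i)) →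
        ∀ i, U i = ⊥) ∧
    (TripleStable s t x xbar p q ↔ TripleSemistable s t x xbar p q) := by
  -- the key condition
  set C : Prop := (∀ U : ∀ i, Submodule F (V i),
        (∀ (h : H), ∀ v ∈ U (s h), x h v ∈ U (t h)) →
        (∀ (h : H), ∀ v ∈ U (t h), xbar h v ∈ U (s h)) →
        (∀ i, U i ≤ LinearMap.ker (q i)) →
        ∀ i, U i = ⊥) with hC
  have hbotdim : ∀ U : ∀ i, Submodule F (V i),
      thetaDim U (⊥ : Submodule F F) = -(∑ i, (finrank F (U i) : ℤ)) := by
    intro U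
    simp [thetaDim]
  have htopdim : ∀ U : ∀ i, Submodule F (V i),
      thetaDim U (⊤ : Submodule F F) =
        -(∑ i, (finrank F (U i) : ℤ)) + ∑ i, (finrank F (V i) : ℤ) := by
    intro U
    simp [thetaDim]
  have hsumnn : ∀ U : ∀ i, Submodule F (V i),
      (0 : ℤ) ≤ ∑ i, (finrank F (U i) : ℤ) :=
    fun U => Finset.sum_nonneg fun i _ => Int.natCast_nonneg _
  have hallbot : ∀ U : ∀ i, Submodule F (V i),
      (∑ i, (finrank F (U i) : ℤ)) ≤ 0 → ∀ i, U i = ⊥ := by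
    intro U hle i
    have h0 : ∑ i, (finrank F (U i) : ℤ) = 0 := le_antisymm hle (hsumnn U)
    have := (Finset.sum_eq_zero_iff_of_nonneg
      (fun i _ => Int.natCast_nonneg (finrank F (U i)))).mp h0 i (Finset.mem_univ i)
    have : finrank F (U i) = 0 := by exact_mod_cast this
    exact Submodule.finrank_eq_zero.mp this
  -- semistable → C
  have hSemiC : TripleSemistable s t x xbar p q → C := by
    intro hs U hx hxb hq
    by_cases hb : ∀ i, U i = ⊥
    · exact hb
    · have hinv : TripleInvariant s t x xbar p q U ⊥ :=
        ⟨hx, hxb, fun h => absurd h bot_ne_top, fun _ => hq⟩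
      have := hs U ⊥ hinv (fun h => hb h.1) (fun h => bot_ne_top h.2)
      rw [hbotdim] at this
      exact hallbot U (by linarith)
  -- C → stable
  have hCS : C → TripleStable s t x xbar p q := by
    intro hc U c hinv hne0 hneT
    rcases Ideal.eq_bot_or_top (show Ideal F from c) with rfl | rfl
    · exact absurd ⟨hc U hinv.1 hinv.2.1 (hinv.2.2.2 rfl), rfl⟩ hne0
    · rw [htopdim]
      have hlt : ∑ i, (finrank F (U i) : ℤ) < ∑ i, (finrank F (V i) : ℤ) := by
        have hexists : ∃ i, U i ≠ ⊤ := by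
          by_contra h
          push_neg at h
          exact hneT ⟨h, rfl⟩
        obtain ⟨i0, hi0⟩ := hexists
        refine Finset.sum_lt_sum (fun i _ => ?_) ⟨i0, Finset.mem_univ i0, ?_⟩
        · exact_mod_cast Submodule.finrank_le (U i)
        · exact_mod_cast Submodule.finrank_lt hi0
      linarith
  -- stable → semistable
  have hSSemi : TripleStable s t x xbar p q → TripleSemistable s t x xbar p q :=
    fun hs U c hinv h0 hT => le_of_lt (hs U c hinv h0 hT)
  have hSC : TripleStable s t x xbar p q → C := fun hs => hSemiC (hSSemi hs)
  exact ⟨⟨hSC, hCS⟩, ⟨hSSemi, fun hs => hCS (hSemiC hs)⟩⟩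
end
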